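/- arXiv:1306.1449 — 3 statements merged into one kernel-verified Lean document; each statement's English description precedes it below -/
import Mathlib

section
/- Let μ > 0 and let h : ℝ → ℝ be continuous and 1-periodic. Then ∂ₓ²(P∗h)(x) = (12/μ)·(P∗h)(x) − (12/μ)·h(x) for every x ∈ ℝ. -/
/-- The 1-periodic Green's function of the operator `1 - (μ/12)∂ₓ²`. -/
noncomputable def P (μ x : ℝ) : ℝ :=
  Real.sqrt (3/μ) *
    (Real.exp (2 * Real.sqrt (3/μ) * (x - ⌊x⌋)) +
     Real.exp (2 * Real.sqrt (3/μ) * (1 - (x - ⌊x⌋)))) /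
  (Real.exp (2 * Real.sqrt (3/μ)) - 1)

/-- Periodic convolution with the kernel `P` over one period. -/
noncomputable def pconv (μ : ℝ) (h : ℝ → ℝ) (x : ℝ) : ℝ :=
  ∫ y in (0:ℝ)..1, P μ (x - y) * h y

/-!
On `[0, 1]` the kernel is `c (e^{2sz} + e^{2s} e^{-2sz})` with `s = √(3/μ)`, `c = s / (e^{2s} - 1)`,
and by periodicity `(P∗h)(x) = ∫_{x-1}^x P(x-y) h(y) dy`. Each piece
`W_r(x) = ∫_{x-1}^x e^{r(x-y)} h(y) dy` (`expWindow r h x`) satisfies `W_r' = r W_r + (1 - e^r) h`,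
the last term coming from the moving endpoints of the window. In the symmetric combination
`W_r + e^r W_{-r}` these boundary terms cancel after one differentiation and add up after the
second, to `2 c r (1 - e^r) h = -(12/μ) h` for `r = 2s`.
-/

open Real

lemma P_periodic (μ : ℝ) : Function.Periodic (P μ) 1 := by
  intro x
  simp only [P, Int.floor_add_one, Int.cast_add, Int.cast_one]
  ring_nf

lemma P_eq_of_mem_Icc (μ : ℝ) {z : ℝ} (hz : z ∈ Set.Icc (0 : ℝ) 1) :
    P μ z = √(3 / μ) / (exp (2 * √(3 / μ)) - 1) *
      (exp (2 * √(3 / μ) * z) + exp (2 * √(3 / μ)) * exp (-(2 * √(3 / μ)) * z)) := by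
  rcases hz.2.eq_or_lt with rfl | hz1
  · simp only [P, Int.floor_one, Int.cast_one, sub_self, mul_zero, mul_one, sub_zero,
      ← exp_add, add_neg_cancel]
    ring
  · rw [P, Int.floor_eq_zero_iff.mpr ⟨hz.1, hz1⟩, Int.cast_zero, sub_zero, mul_sub, mul_one,
      sub_eq_add_neg, exp_add, ← neg_mul, mul_div_right_comm]

lemma hasDerivAt_intervalIntegral_sub_left {g : ℝ → ℝ} (hg : Continuous g) (T x : ℝ) :
    HasDerivAt (fun u => ∫ y in (u - T)..u, g y) (g x - g (x - T)) x := by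
  have hwindow : (fun u => ∫ y in (u - T)..u, g y) =
      fun u => (∫ y in (0 : ℝ)..u, g y) - ∫ y in (0 : ℝ)..(u - T), g y := by
    funext u
    rw [intervalIntegral.integral_interval_sub_left (hg.intervalIntegrable _ _)
      (hg.intervalIntegrable _ _)]
  rw [hwindow]
  exact (hg.integral_hasStrictDerivAt 0 x).hasDerivAt.sub
    ((hg.integral_hasStrictDerivAt 0 (x - T)).hasDerivAt.comp_sub_const x T)

noncomputable def expWindow (r : ℝ) (h : ℝ → ℝ) (x : ℝ) : ℝ :=
  ∫ y in (x - 1)..x, exp (r * (x - y)) * h y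

lemma expWindow_eq (r : ℝ) (h : ℝ → ℝ) (x : ℝ) :
    expWindow r h x = exp (r * x) * ∫ y in (x - 1)..x, exp (-r * y) * h y := by
  rw [expWindow, ← intervalIntegral.integral_const_mul]
  congr 1 with y
  rw [← mul_assoc, ← exp_add]
  ring_nf

lemma hasDerivAt_expWindow (r : ℝ) {h : ℝ → ℝ} (hc : Continuous h) (hp : Function.Periodic h 1)
    (x : ℝ) : HasDerivAt (expWindow r h) (r * expWindow r h x + (1 - exp r) * h x) x := by
  have hg : Continuous fun y => exp (-r * y) * h y := by fun_prop
  have H : HasDerivAt (fun u => exp (r * u) * ∫ y in (u - 1)..u, exp (-r * y) * h y)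
      (exp (r * x) * r * (∫ y in (x - 1)..x, exp (-r * y) * h y) +
        exp (r * x) * (exp (-r * x) * h x - exp (-r * (x - 1)) * h (x - 1))) x :=
    (((hasDerivAt_id x).const_mul r).exp.congr_deriv (by simp)).mul
      (hasDerivAt_intervalIntegral_sub_left hg 1 x)
  rw [expWindow_eq r h x, funext (expWindow_eq r h)]
  refine H.congr_deriv ?_
  rw [hp.sub_eq, show -r * (x - 1) = -r * x + r by ring, exp_add]
  have hinv : exp (r * x) * exp (-r * x) = 1 := by rw [← exp_add]; ring_nf; simp
  linear_combination (h x - exp r * h x) * hinv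

lemma pconv_eq_expWindow (μ : ℝ) {h : ℝ → ℝ} (hc : Continuous h) (hp : Function.Periodic h 1)
    (x : ℝ) :
    pconv μ h x = √(3 / μ) / (exp (2 * √(3 / μ)) - 1) *
      (expWindow (2 * √(3 / μ)) h x + exp (2 * √(3 / μ)) * expWindow (-(2 * √(3 / μ))) h x) := by
  set s := √(3 / μ)
  set c := s / (exp (2 * s) - 1)
  have hper : Function.Periodic (fun y => P μ (x - y) * h y) 1 := fun y => by
    simp only [show x - (y + 1) = x - y - 1 by ring, (P_periodic μ).sub_eq, hp y]
  have hshift := hper.intervalIntegral_add_eq 0 (x - 1)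
  rw [zero_add, sub_add_cancel] at hshift
  have hkernel : ∀ y ∈ Set.uIcc (x - 1) x, P μ (x - y) * h y =
      c * (exp (2 * s * (x - y)) * h y) + c * exp (2 * s) * (exp (-(2 * s) * (x - y)) * h y) := by
    intro y hy
    rw [Set.uIcc_of_le (by linarith)] at hy
    rw [P_eq_of_mem_Icc μ ⟨by linarith [hy.2], by linarith [hy.1]⟩]
    ring
  have hint : ∀ r : ℝ, IntervalIntegrable (fun y => exp (r * (x - y)) * h y) MeasureTheory.volume
      (x - 1) x := fun r => by
    apply Continuous.intervalIntegrable; fun_prop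
  rw [pconv, hshift, intervalIntegral.integral_congr hkernel,
    intervalIntegral.integral_add ((hint _).const_mul _) ((hint _).const_mul _),
    intervalIntegral.integral_const_mul, intervalIntegral.integral_const_mul, expWindow,
    expWindow]
  ring

section SymmetricKernel

variable (a r : ℝ) {h : ℝ → ℝ}

lemma hasDerivAt_symm_expWindow (hc : Continuous h) (hp : Function.Periodic h 1) (x : ℝ) :
    HasDerivAt (fun x => a * (expWindow r h x + exp r * expWindow (-r) h x))
      (a * r * (expWindow r h x - exp r * expWindow (-r) h x)) x := by
  refine (((hasDerivAt_expWindow r hc hp x).add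
    ((hasDerivAt_expWindow (-r) hc hp x).const_mul (exp r))).const_mul a).congr_deriv ?_
  have hinv : exp r * exp (-r) = 1 := by rw [← exp_add]; simp
  linear_combination (-a * h x) * hinv

lemma hasDerivAt_antisymm_expWindow (hc : Continuous h) (hp : Function.Periodic h 1) (x : ℝ) :
    HasDerivAt (fun x => a * r * (expWindow r h x - exp r * expWindow (-r) h x))
      (r ^ 2 * (a * (expWindow r h x + exp r * expWindow (-r) h x))
        + 2 * a * r * (1 - exp r) * h x) x := by
  refine (((hasDerivAt_expWindow r hc hp x).sub
    ((hasDerivAt_expWindow (-r) hc hp x).const_mul (exp r))).const_mul (a * r)).congr_deriv ?_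
  have hinv : exp r * exp (-r) = 1 := by rw [← exp_add]; simp
  linear_combination (a * r * h x) * hinv

lemma deriv_deriv_symm_expWindow (hc : Continuous h) (hp : Function.Periodic h 1) (x : ℝ) :
    deriv (deriv fun x => a * (expWindow r h x + exp r * expWindow (-r) h x)) x =
      r ^ 2 * (a * (expWindow r h x + exp r * expWindow (-r) h x))
        + 2 * a * r * (1 - exp r) * h x := by
  rw [funext fun x => (hasDerivAt_symm_expWindow a r hc hp x).deriv]
  exact (hasDerivAt_antisymm_expWindow a r hc hp x).deriv

end SymmetricKernel

/-- For `μ > 0` and `h` continuous and 1-periodic,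
`∂ₓ²(P∗h) = (12/μ)·(P∗h) - (12/μ)·h` everywhere. -/
theorem stmt2 (μ : ℝ) (hμ : 0 < μ) (h : ℝ → ℝ) (hc : Continuous h)
    (hp : Function.Periodic h 1) :
    ∀ x : ℝ, deriv (deriv (pconv μ h)) x = (12/μ) * pconv μ h x - (12/μ) * h x := by
  intro x
  set s := √(3 / μ) with hs_def
  have hs : 0 < s := Real.sqrt_pos.mpr (by positivity)
  have hsq : (2 * s) ^ 2 = 12 / μ := by
    rw [mul_pow, Real.sq_sqrt (by positivity)]; ring
  have hexp : exp (2 * s) - 1 ≠ 0 := (sub_pos.mpr (one_lt_exp_iff.mpr (by positivity))).ne'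
  have hcoef : 2 * (s / (exp (2 * s) - 1)) * (2 * s) * (1 - exp (2 * s)) = -(12 / μ) := by
    rw [← hsq]; field_simp; ring
  rw [funext (pconv_eq_expWindow μ hc hp), deriv_deriv_symm_expWindow _ _ hc hp, ← hs_def, hsq]
  linear_combination h x * hcoef
end

section
/- Let u be a classical 1-periodic solution of the moderate-amplitude surface wave equation on [0,T). Then for every t ∈ [0,T), (1/2)·d/dt ∫₀¹ (u_x² + (μ/12)·u_{xx}²) dx = ∫₀¹ ( (3/2)ε u u_x u_{xx} − (3/8)ε² u² u_x u_{xx} + (3/16)ε³ u³ u_x u_{xx} + (7εμ/24)(u u_{xx} u_{xxx} + 2 u_x u_{xx}²) ) dx. -/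
/-! Multiplying the equation by `u_xx` turns `u_xx u_t` into
`u_x u_tx + (μ/12) u_xx u_txx` minus the right-hand side, up to the exact derivative
`∂ₓ(u_x u_t + u_x²/2 + (μ/24) u_xx²)`, whose integral over a period vanishes. The left-hand side
is what differentiating the energy under the integral sign produces, once `∂ₜu_x = u_tx` and
`∂ₜu_xx = u_txx` are known: the solution only provides the `x`-derivatives of `u_t`, so these
mixed partials are obtained by differentiating `∫ₛ u_t = u(·, τ) - u(·, 0)` in `x`. -/

/-- A classical 1-periodic solution of the moderate-amplitude surface wave equation
`u_t + u_x + (3/2)ε u u_x - (3/8)ε² u² u_x + (3/16)ε³ u³ u_x + (μ/12)(u_{xxx} - u_{xxt})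
 + (7εμ/24)(u u_{xxx} + 2 u_x u_{xx}) = 0` on `ℝ × [0,T)`, recorded together with all the
partial derivatives appearing in the equation. -/
structure ClassicalSol (ε μ T : ℝ) where
  u : ℝ → ℝ → ℝ
  ux : ℝ → ℝ → ℝ
  uxx : ℝ → ℝ → ℝ
  uxxx : ℝ → ℝ → ℝ
  ut : ℝ → ℝ → ℝ
  utx : ℝ → ℝ → ℝ
  utxx : ℝ → ℝ → ℝ
  periodic : ∀ t ∈ Set.Ico (0:ℝ) T, Function.Periodic (fun x => u x t) 1
  hux : ∀ (x : ℝ), ∀ t ∈ Set.Ico (0:ℝ) T, HasDerivAt (fun x' => u x' t) (ux x t) x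
  huxx : ∀ (x : ℝ), ∀ t ∈ Set.Ico (0:ℝ) T, HasDerivAt (fun x' => ux x' t) (uxx x t) x
  huxxx : ∀ (x : ℝ), ∀ t ∈ Set.Ico (0:ℝ) T, HasDerivAt (fun x' => uxx x' t) (uxxx x t) x
  hut : ∀ (x : ℝ), ∀ t ∈ Set.Ico (0:ℝ) T,
    HasDerivWithinAt (fun t' => u x t') (ut x t) (Set.Ico (0:ℝ) T) t
  hutx : ∀ (x : ℝ), ∀ t ∈ Set.Ico (0:ℝ) T, HasDerivAt (fun x' => ut x' t) (utx x t) x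
  hutxx : ∀ (x : ℝ), ∀ t ∈ Set.Ico (0:ℝ) T, HasDerivAt (fun x' => utx x' t) (utxx x t) x
  contu : ContinuousOn (fun p : ℝ × ℝ => u p.1 p.2) (Set.univ ×ˢ Set.Ico (0:ℝ) T)
  contux : ContinuousOn (fun p : ℝ × ℝ => ux p.1 p.2) (Set.univ ×ˢ Set.Ico (0:ℝ) T)
  contuxx : ContinuousOn (fun p : ℝ × ℝ => uxx p.1 p.2) (Set.univ ×ˢ Set.Ico (0:ℝ) T)
  contuxxx : ContinuousOn (fun p : ℝ × ℝ => uxxx p.1 p.2) (Set.univ ×ˢ Set.Ico (0:ℝ) T)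
  contut : ContinuousOn (fun p : ℝ × ℝ => ut p.1 p.2) (Set.univ ×ˢ Set.Ico (0:ℝ) T)
  contutx : ContinuousOn (fun p : ℝ × ℝ => utx p.1 p.2) (Set.univ ×ˢ Set.Ico (0:ℝ) T)
  contutxx : ContinuousOn (fun p : ℝ × ℝ => utxx p.1 p.2) (Set.univ ×ˢ Set.Ico (0:ℝ) T)
  eqn : ∀ (x : ℝ), ∀ t ∈ Set.Ico (0:ℝ) T,
    ut x t + ux x t + (3/2) * ε * u x t * ux x t - (3/8) * ε^2 * (u x t)^2 * ux x t
      + (3/16) * ε^3 * (u x t)^3 * ux x t + (μ/12) * (uxxx x t - utxx x t)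
      + (7 * ε * μ / 24) * (u x t * uxxx x t + 2 * ux x t * uxx x t) = 0

open MeasureTheory Set Function intervalIntegral
open scoped Topology

theorem Function.Periodic.of_hasDerivAt {𝕜 F : Type*} [NontriviallyNormedField 𝕜]
    [NormedAddCommGroup F] [NormedSpace 𝕜 F] {f f' : 𝕜 → F} {p : 𝕜} (hf : Periodic f p)
    (hd : ∀ x, HasDerivAt f (f' x) x) : Periodic f' p := fun x =>
  (hf.funext ▸ (hd (x + p)).comp_add_const x p).unique (hd x)

section ParametricIntegral

variable {a b c d : ℝ}

theorem continuousOn_intervalIntegral_of_continuousOn_prod {F : ℝ → ℝ → ℝ}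
    (hF : ContinuousOn (uncurry F) (uIcc a b ×ˢ Icc c d)) :
    ContinuousOn (fun σ => ∫ x in a..b, F x σ) (Icc c d) := by
  intro σ hσ
  have hcd : c ≤ d := hσ.1.trans hσ.2
  -- Clamping both arguments extends `F` continuously to the whole plane.
  set G : ℝ → ℝ → ℝ := fun σ x =>
    F (projIcc (min a b) (max a b) min_le_max x) (projIcc c d hcd σ)
  have hG : Continuous (uncurry G) :=
    hF.comp_continuous
      (f := fun p : ℝ × ℝ => ((projIcc (min a b) (max a b) min_le_max p.2 : ℝ),
        (projIcc c d hcd p.1 : ℝ)))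
      (by fun_prop) fun _ => ⟨Subtype.prop _, Subtype.prop _⟩
  have hGF : EqOn (fun σ => ∫ x in a..b, G σ x) (fun σ => ∫ x in a..b, F x σ) (Icc c d) :=
    fun σ hσ => integral_congr fun x hx => by
      simp only [G, projIcc_of_mem _ hx, projIcc_of_mem _ hσ]
  exact ((continuous_parametric_intervalIntegral_of_continuous' hG a b).continuousOn.congr
    hGF.symm) σ hσ

theorem integral_hasDerivWithinAt_Icc {f : ℝ → ℝ} {τ : ℝ} (hf : ContinuousOn f (Icc c d))
    (hτ : τ ∈ Icc c d) :
    HasDerivWithinAt (fun σ => ∫ s in c..σ, f s) (f τ) (Icc c d) τ :=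
  have : Fact (τ ∈ Icc c d) := ⟨hτ⟩
  integral_hasDerivWithinAt_right
    ((hf.mono (Icc_subset_Icc_right hτ.2)).intervalIntegrable_of_Icc hτ.1)
    (hf.stronglyMeasurableAtFilter_nhdsWithin measurableSet_Icc τ) (hf τ hτ)

theorem integral_eq_sub_of_hasDerivWithinAt_Icc {f f' : ℝ → ℝ} {τ : ℝ}
    (hf : ∀ σ ∈ Icc c d, HasDerivWithinAt f (f' σ) (Icc c d) σ)
    (hf' : ContinuousOn f' (Icc c d)) (hτ : τ ∈ Icc c d) :
    ∫ s in c..τ, f' s = f τ - f c := by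
  have hsub : Icc c τ ⊆ Icc c d := Icc_subset_Icc_right hτ.2
  refine integral_eq_sub_of_hasDerivAt_of_le hτ.1
    (fun σ hσ => (hf σ (hsub hσ)).continuousWithinAt.mono hsub) (fun σ hσ => ?_)
    ((hf'.mono hsub).intervalIntegrable_of_Icc hτ.1)
  exact (hf σ (hsub (Ioo_subset_Icc_self hσ))).hasDerivAt
    (Icc_mem_nhds hσ.1 (hσ.2.trans_le hτ.2))

theorem hasDerivWithinAt_intervalIntegral_Icc {F F' : ℝ → ℝ → ℝ} {τ : ℝ}
    (hF : ∀ σ ∈ Icc c d, IntervalIntegrable (F · σ) volume a b)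
    (hF_deriv : ∀ x ∈ uIcc a b, ∀ σ ∈ Icc c d, HasDerivWithinAt (F x) (F' x σ) (Icc c d) σ)
    (hF' : ContinuousOn (uncurry F') (uIcc a b ×ˢ Icc c d)) (hτ : τ ∈ Icc c d) :
    HasDerivWithinAt (fun σ => ∫ x in a..b, F x σ) (∫ x in a..b, F' x τ) (Icc c d) τ := by
  have hc : c ∈ Icc c d := ⟨le_rfl, hτ.1.trans hτ.2⟩
  have key : ∀ σ ∈ Icc c d,
      ∫ x in a..b, F x σ = (∫ x in a..b, F x c) + ∫ s in c..σ, ∫ x in a..b, F' x s := by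
    intro σ hσ
    have hcσ : uIcc c σ ⊆ Icc c d := uIcc_subset_Icc hc hσ
    have hint : IntegrableOn (uncurry F') (uIoc a b ×ˢ uIoc c σ) :=
      ((hF'.mono (prod_mono subset_rfl hcσ)).integrableOn_compact
        (isCompact_uIcc.prod isCompact_uIcc)).mono_set
        (prod_mono uIoc_subset_uIcc uIoc_subset_uIcc)
    rw [← intervalIntegral_intervalIntegral_swap hint, ← sub_eq_iff_eq_add',
      ← integral_sub (hF σ hσ) (hF c hc)]
    exact integral_congr fun x hx =>
      (integral_eq_sub_of_hasDerivWithinAt_Icc (hF_deriv x hx) (hF'.uncurry_left x hx) hσ).symm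
  exact ((integral_hasDerivWithinAt_Icc
    (continuousOn_intervalIntegral_of_continuousOn_prod hF') hτ).const_add
      (∫ x in a..b, F x c)).congr key (key τ hτ)

theorem hasDerivWithinAt_of_mixed_partials {v vx w wx : ℝ → ℝ → ℝ}
    (hvx : ∀ x, ∀ σ ∈ Icc c d, HasDerivAt (v · σ) (vx x σ) x)
    (hvt : ∀ x, ∀ σ ∈ Icc c d, HasDerivWithinAt (v x) (w x σ) (Icc c d) σ)
    (hwx : ∀ x, ∀ σ ∈ Icc c d, HasDerivAt (w · σ) (wx x σ) x)
    (hw : ContinuousOn (uncurry w) (univ ×ˢ Icc c d))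
    (hwx' : ContinuousOn (uncurry wx) (univ ×ˢ Icc c d)) (x : ℝ) {τ : ℝ} (hτ : τ ∈ Icc c d) :
    HasDerivWithinAt (vx x) (wx x τ) (Icc c d) τ := by
  have hc : c ∈ Icc c d := ⟨le_rfl, hτ.1.trans hτ.2⟩
  -- Differentiate `y ↦ ∫ s in c..σ, w y s = v y σ - v y c` in `y`.
  have key : ∀ σ ∈ Icc c d, vx x σ = vx x c + ∫ s in c..σ, wx x s := by
    intro σ hσ
    have hcσ : uIcc c σ ⊆ Icc c d := uIcc_subset_Icc hc hσ
    have hy : Icc (x - 1) (x + 1) ∈ 𝓝 x := Icc_mem_nhds (by linarith) (by linarith)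
    have hderiv : HasDerivAt (fun y => ∫ s in c..σ, w y s) (∫ s in c..σ, wx x s) x :=
      (hasDerivWithinAt_intervalIntegral_Icc
        (F := fun s y => w y s) (F' := fun s y => wx y s)
        (fun y _ => ((hw.uncurry_left y (mem_univ y)).mono hcσ).intervalIntegrable)
        (fun s hs y _ => (hwx y s (hcσ hs)).hasDerivWithinAt)
        (hwx'.comp continuous_swap.continuousOn fun p hp => ⟨trivial, hcσ hp.1⟩)
        ⟨by linarith, by linarith⟩).hasDerivAt hy
    have hprim : (fun y => ∫ s in c..σ, w y s) = fun y => v y σ - v y c := funext fun y =>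
      integral_eq_sub_of_hasDerivWithinAt_Icc (hvt y) (hw.uncurry_left y (mem_univ y)) hσ
    rw [hprim] at hderiv
    linarith [hderiv.unique ((hvx x σ hσ).sub (hvx x c hc))]
  exact ((integral_hasDerivWithinAt_Icc (hwx'.uncurry_left x (mem_univ x)) hτ).const_add
    (vx x c)).congr key (key τ hτ)

end ParametricIntegral

theorem ContinuousOn.continuous_of_univ_prod {α β γ : Type*} [TopologicalSpace α]
    [TopologicalSpace β] [TopologicalSpace γ] {f : α → β → γ} {s : Set β} {b : β}
    (hf : ContinuousOn (uncurry f) (univ ×ˢ s)) (hb : b ∈ s) : Continuous (f · b) :=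
  continuousOn_univ.mp (hf.uncurry_right b hb)

namespace ClassicalSol

variable {ε μ T : ℝ} (sol : ClassicalSol ε μ T) {t : ℝ}

theorem periodic_ux (ht : t ∈ Ico 0 T) : Periodic (sol.ux · t) 1 :=
  (sol.periodic t ht).of_hasDerivAt fun x => sol.hux x t ht

theorem periodic_uxx (ht : t ∈ Ico 0 T) : Periodic (sol.uxx · t) 1 :=
  (sol.periodic_ux ht).of_hasDerivAt fun x => sol.huxx x t ht

theorem periodic_ut (ht : t ∈ Ico 0 T) : Periodic (sol.ut · t) 1 := fun x =>
  (uniqueDiffOn_Ico 0 T t ht).eq_deriv _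
    ((sol.hut (x + 1) t ht).congr (fun s hs => (sol.periodic s hs x).symm)
      (sol.periodic t ht x).symm)
    (sol.hut x t ht)

noncomputable def energyFlux (x t : ℝ) : ℝ :=
  sol.ux x t * sol.ut x t + (1/2) * (sol.ux x t)^2 + (μ/24) * (sol.uxx x t)^2

noncomputable def energySource (x t : ℝ) : ℝ :=
  (3/2) * ε * sol.u x t * sol.ux x t * sol.uxx x t
    - (3/8) * ε^2 * (sol.u x t)^2 * sol.ux x t * sol.uxx x t
    + (3/16) * ε^3 * (sol.u x t)^3 * sol.ux x t * sol.uxx x t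
    + (7 * ε * μ / 24) * (sol.u x t * sol.uxx x t * sol.uxxx x t
        + 2 * sol.ux x t * (sol.uxx x t)^2)

theorem hasDerivAt_energyFlux (ht : t ∈ Ico 0 T) (x : ℝ) :
    HasDerivAt (sol.energyFlux · t)
      (sol.ux x t * sol.utx x t + (μ/12) * (sol.uxx x t * sol.utxx x t)
        - sol.energySource x t) x := by
  have h := (((sol.huxx x t ht).mul (sol.hutx x t ht)).add
    (((sol.huxx x t ht).pow 2).const_mul (1/2))).add
      (((sol.huxxx x t ht).pow 2).const_mul (μ/24))
  refine h.congr_deriv ?_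
  simp only [energySource]
  push_cast
  linear_combination sol.uxx x t * sol.eqn x t ht

theorem integral_energySource (ht : t ∈ Ico 0 T) :
    ∫ x in (0:ℝ)..1, sol.energySource x t
      = ∫ x in (0:ℝ)..1,
          (sol.ux x t * sol.utx x t + (μ/12) * (sol.uxx x t * sol.utxx x t)) := by
  have := sol.contu.continuous_of_univ_prod ht
  have := sol.contux.continuous_of_univ_prod ht
  have := sol.contuxx.continuous_of_univ_prod ht
  have := sol.contuxxx.continuous_of_univ_prod ht
  have := sol.contutx.continuous_of_univ_prod ht
  have := sol.contutxx.continuous_of_univ_prod ht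
  have hflux := integral_eq_sub_of_hasDerivAt (fun x _ => sol.hasDerivAt_energyFlux ht x)
    (Continuous.intervalIntegrable (by unfold energySource; fun_prop) 0 1)
  have hperiodic : sol.energyFlux (0 + 1) t = sol.energyFlux 0 t := by
    simp only [energyFlux, sol.periodic_ux ht 0, sol.periodic_uxx ht 0, sol.periodic_ut ht 0]
  rw [zero_add] at hperiodic
  rw [hperiodic, sub_self, intervalIntegral.integral_sub
    (Continuous.intervalIntegrable (by fun_prop) 0 1)
    (Continuous.intervalIntegrable (by unfold energySource; fun_prop) 0 1), sub_eq_zero] at hflux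
  exact hflux.symm

theorem hasDerivWithinAt_energy (ht : t ∈ Ico 0 T) :
    HasDerivWithinAt
      (fun τ => (1/2) * (∫ x in (0:ℝ)..1, ((sol.ux x τ)^2 + (μ/12) * (sol.uxx x τ)^2)))
      (∫ x in (0:ℝ)..1, (sol.ux x t * sol.utx x t + (μ/12) * (sol.uxx x t * sol.utxx x t)))
      (Ico 0 T) t := by
  -- Work on `[0, b]`, a compact neighbourhood of `t` in `[0, T)`.
  obtain ⟨b, htb, hbT⟩ := exists_between ht.2
  have hsub : Icc 0 b ⊆ Ico 0 T := Icc_subset_Ico_right hbT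
  have hrect : (univ : Set ℝ) ×ˢ Icc 0 b ⊆ univ ×ˢ Ico 0 T := prod_mono subset_rfl hsub
  have hux_t : ∀ x, ∀ σ ∈ Icc 0 b, HasDerivWithinAt (sol.ux x) (sol.utx x σ) (Icc 0 b) σ :=
    fun x _ hσ => hasDerivWithinAt_of_mixed_partials (fun x σ hσ => sol.hux x σ (hsub hσ))
      (fun x σ hσ => (sol.hut x σ (hsub hσ)).mono hsub) (fun x σ hσ => sol.hutx x σ (hsub hσ))
      (sol.contut.mono hrect) (sol.contutx.mono hrect) x hσ
  have huxx_t : ∀ x, ∀ σ ∈ Icc 0 b, HasDerivWithinAt (sol.uxx x) (sol.utxx x σ) (Icc 0 b) σ :=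
    fun x _ hσ => hasDerivWithinAt_of_mixed_partials (fun x σ hσ => sol.huxx x σ (hsub hσ))
      hux_t (fun x σ hσ => sol.hutxx x σ (hsub hσ))
      (sol.contutx.mono hrect) (sol.contutxx.mono hrect) x hσ
  have hK : uIcc (0:ℝ) 1 ×ˢ Icc 0 b ⊆ univ ×ˢ Ico 0 T := prod_mono (subset_univ _) hsub
  have hE := hasDerivWithinAt_intervalIntegral_Icc (a := 0) (b := 1)
    (F := fun x σ => (sol.ux x σ)^2 + (μ/12) * (sol.uxx x σ)^2)
    (F' := fun x σ => 2 * (sol.ux x σ * sol.utx x σ + (μ/12) * (sol.uxx x σ * sol.utxx x σ)))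
    (fun σ hσ => Continuous.intervalIntegrable (by
      have := sol.contux.continuous_of_univ_prod (hsub hσ)
      have := sol.contuxx.continuous_of_univ_prod (hsub hσ)
      fun_prop) 0 1)
    (fun x _ σ hσ => (((hux_t x σ hσ).pow 2).add (((huxx_t x σ hσ).pow 2).const_mul (μ/12)))
      |>.congr_deriv (by push_cast; ring))
    (continuousOn_const.mul (((sol.contux.mono hK).mul (sol.contutx.mono hK)).add
      (continuousOn_const.mul ((sol.contuxx.mono hK).mul (sol.contutxx.mono hK)))))
    ⟨ht.1, htb.le⟩
  have hnhds : Icc 0 b ∈ 𝓝[Ico 0 T] t :=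
    mem_nhdsWithin.2 ⟨Iio b, isOpen_Iio, htb, fun s hs => ⟨hs.2.1, hs.1.le⟩⟩
  refine ((hE.const_mul (1/2)).mono_of_mem_nhdsWithin hnhds).congr_deriv ?_
  rw [intervalIntegral.integral_const_mul]
  ring

end ClassicalSol

theorem stmt5_general (ε μ T : ℝ) (sol : ClassicalSol ε μ T) :
    ∀ t ∈ Set.Ico (0:ℝ) T,
      HasDerivWithinAt
        (fun τ => (1/2) * (∫ x in (0:ℝ)..1, ((sol.ux x τ)^2 + (μ/12) * (sol.uxx x τ)^2)))
        (∫ x in (0:ℝ)..1,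
          ((3/2) * ε * sol.u x t * sol.ux x t * sol.uxx x t
            - (3/8) * ε^2 * (sol.u x t)^2 * sol.ux x t * sol.uxx x t
            + (3/16) * ε^3 * (sol.u x t)^3 * sol.ux x t * sol.uxx x t
            + (7 * ε * μ / 24) * (sol.u x t * sol.uxx x t * sol.uxxx x t
                + 2 * sol.ux x t * (sol.uxx x t)^2)))
        (Set.Ico (0:ℝ) T) t := fun _ ht =>
  sol.integral_energySource ht ▸ sol.hasDerivWithinAt_energy ht

/-- Differential identity for the higher-order energy: for every `t ∈ [0,T)`,
`(1/2) d/dt ∫₀¹ (u_x² + (μ/12)u_xx²) dx = ∫₀¹ ((3/2)ε u u_x u_xx - (3/8)ε² u² u_x u_xx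
 + (3/16)ε³ u³ u_x u_xx + (7εμ/24)(u u_xx u_xxx + 2 u_x u_xx²)) dx`. -/
theorem stmt5 (ε μ T : ℝ) (hε : 0 < ε) (hμ : 0 < μ) (hT : 0 < T)
    (sol : ClassicalSol ε μ T) :
    ∀ t ∈ Set.Ico (0:ℝ) T,
      HasDerivWithinAt
        (fun τ => (1/2) * (∫ x in (0:ℝ)..1, ((sol.ux x τ)^2 + (μ/12) * (sol.uxx x τ)^2)))
        (∫ x in (0:ℝ)..1,
          ((3/2) * ε * sol.u x t * sol.ux x t * sol.uxx x t
            - (3/8) * ε^2 * (sol.u x t)^2 * sol.ux x t * sol.uxx x t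
            + (3/16) * ε^3 * (sol.u x t)^3 * sol.ux x t * sol.uxx x t
            + (7 * ε * μ / 24) * (sol.u x t * sol.uxx x t * sol.uxxx x t
                + 2 * sol.ux x t * (sol.uxx x t)^2)))
        (Set.Ico (0:ℝ) T) t :=
  stmt5_general ε μ T sol
end

section
/- Let T > 0 and let u : ℝ×[0,T) → ℝ be 1-periodic in its first variable with u, u_x and u_{tx} continuous on ℝ×[0,T). Define S(t) = sup_{x∈ℝ} u_x(x,t). Then: (i) for every t ∈ [0,T) there exists at least one point ξ(t) ∈ [0,1] with u_x(ξ(t),t) = S(t); (ii) S is locally Lipschitz on [0,T), hence differentiable at almost every t ∈ (0,T); and (iii) for almost every t ∈ (0,T), S'(t) = u_{tx}(ξ,t) for every point ξ at which u_x(·,t) attains its maximum S(t). -/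
open Set Filter Topology MeasureTheory
open scoped NNReal

/-! By periodicity `sup_x u_x(x,t)` is a maximum over the compact `[0,1]`. Since `u_{tx}` is
bounded on `[0,1] × [a,b]`, the functions `u_x(ξ,·)`, `ξ ∈ [0,1]`, are uniformly Lipschitz there,
and so is their pointwise maximum `S`; Rademacher's theorem gives differentiability a.e. Where `S`
is differentiable and `u_x(ξ,t) = S(t)`, the function `S - u_x(ξ,·) ≥ 0` has a minimum at `t`,
so its derivative vanishes there. -/

theorem Function.Periodic.periodic_of_hasDerivAt {𝕜 F : Type*} [NontriviallyNormedField 𝕜]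
    [NormedAddCommGroup F] [NormedSpace 𝕜 F] {f f' : 𝕜 → F} {c : 𝕜}
    (hf : Function.Periodic f c) (hd : ∀ x, HasDerivAt f (f' x) x) :
    Function.Periodic f' c := fun x => by
  have hshift : HasDerivAt (fun y => f (y + c)) (f' (x + c)) x := (hd (x + c)).comp_add_const x c
  rw [funext hf] at hshift
  exact hshift.unique (hd x)

theorem Function.Periodic.isGreatest_range_sSup {α : Type*} [ConditionallyCompleteLinearOrder α]
    [TopologicalSpace α] [OrderTopology α] {f : ℝ → α} {c : ℝ}
    (hf : Function.Periodic f c) (hc : 0 < c) (hcont : Continuous f) :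
    IsGreatest (range f) (sSup (range f)) := by
  rw [← hf.image_Icc hc 0]
  exact (isCompact_Icc.image hcont).isGreatest_sSup ((nonempty_Icc.2 (by linarith)).image f)

theorem LipschitzOnWith.of_isGreatest_image {α ι : Type*} [PseudoMetricSpace α]
    {g : ι → α → ℝ} {S : α → ℝ} {K : Set ι} {s : Set α} {L : ℝ≥0}
    (hg : ∀ i ∈ K, LipschitzOnWith L (g i) s) (hS : ∀ t ∈ s, IsGreatest ((g · t) '' K) (S t)) :
    LipschitzOnWith L S s := by
  refine LipschitzOnWith.of_le_add_mul L fun x hx y hy => ?_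
  obtain ⟨i, hi, hix⟩ := (hS x hx).1
  calc S x = g i x := hix.symm
    _ ≤ g i y + L * dist x y := (hg i hi).le_add_mul hx hy
    _ ≤ S y + L * dist x y := by gcongr; exact (hS y hy).2 ⟨i, hi, rfl⟩

theorem IsCompact.exists_lipschitzOnWith_of_hasDerivWithinAt {ι F : Type*} [TopologicalSpace ι]
    [NormedAddCommGroup F] [NormedSpace ℝ F] {g g' : ι → ℝ → F} {K : Set ι} {s : Set ℝ}
    (hK : IsCompact K) (hs : IsCompact s) (hconv : Convex ℝ s)
    (hd : ∀ i ∈ K, ∀ t ∈ s, HasDerivWithinAt (g i) (g' i t) s t)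
    (hc : ContinuousOn (fun p : ι × ℝ => g' p.1 p.2) (K ×ˢ s)) :
    ∃ L : ℝ≥0, ∀ i ∈ K, LipschitzOnWith L (g i) s := by
  obtain ⟨C, hC⟩ := (hK.prod hs).exists_bound_of_continuousOn hc
  refine ⟨C.toNNReal, fun i hi => hconv.lipschitzOnWith_of_nnnorm_hasDerivWithin_le (hd i hi)
    fun t ht => ?_⟩
  rw [← NNReal.coe_le_coe, coe_nnnorm]
  exact (hC (i, t) ⟨hi, ht⟩).trans (Real.le_coe_toNNReal C)

theorem ae_differentiableAt_of_forall_lipschitzOnWith_Icc {F : Type*} [NormedAddCommGroup F]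
    [NormedSpace ℝ F] [FiniteDimensional ℝ F] {f : ℝ → F} {a T : ℝ}
    (hf : ∀ b < T, ∃ L : ℝ≥0, LipschitzOnWith L f (Icc a b)) :
    ∀ᵐ t, t ∈ Ioo a T → DifferentiableAt ℝ f t := by
  have hq : ∀ q : ℚ, ∀ᵐ t, (q : ℝ) < T → t ∈ Ioo a q → DifferentiableAt ℝ f t := by
    intro q
    by_cases hqT : (q : ℝ) < T
    · obtain ⟨L, hL⟩ := hf q hqT
      filter_upwards [hL.ae_differentiableWithinAt_of_mem] with t ht _ htq
      exact (ht (Ioo_subset_Icc_self htq)).differentiableAt (Icc_mem_nhds htq.1 htq.2)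
    · exact .of_forall fun _ h => absurd h hqT
  filter_upwards [ae_all_iff.2 hq] with t ht hmem
  obtain ⟨q, htq, hqT⟩ := exists_rat_btwn hmem.2
  exact ht q hqT ⟨hmem.1, htq⟩

theorem HasDerivAt.eq_of_eventuallyLE_of_eq {f g : ℝ → ℝ} {f' g' x : ℝ}
    (hf : HasDerivAt f f' x) (hg : HasDerivAt g g' x) (hle : g ≤ᶠ[𝓝 x] f) (heq : g x = f x) :
    f' = g' := by
  have hmin : IsLocalMin (f - g) x := by
    filter_upwards [hle] with y hy
    simp only [Pi.sub_apply, heq, sub_self, sub_nonneg, hy]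
  exact sub_eq_zero.1 (hmin.hasDerivAt_eq_zero (hf.sub hg))

theorem stmt9_general (T : ℝ) (u ux utx : ℝ → ℝ → ℝ)
    (hper : ∀ t ∈ Set.Ico (0:ℝ) T, Function.Periodic (fun x => u x t) 1)
    (hux : ∀ (x : ℝ), ∀ t ∈ Set.Ico (0:ℝ) T, HasDerivAt (fun x' => u x' t) (ux x t) x)
    (hutx : ∀ (x : ℝ), ∀ t ∈ Set.Ico (0:ℝ) T,
      HasDerivWithinAt (fun t' => ux x t') (utx x t) (Set.Ico (0:ℝ) T) t)
    (hcux : ContinuousOn (fun p : ℝ × ℝ => ux p.1 p.2) (Set.univ ×ˢ Set.Ico (0:ℝ) T))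
    (hcutx : ContinuousOn (fun p : ℝ × ℝ => utx p.1 p.2) (Set.univ ×ˢ Set.Ico (0:ℝ) T))
    (S : ℝ → ℝ) (hS : ∀ t, S t = sSup (Set.range fun x => ux x t)) :
    -- (i) the supremum is attained at some point of [0,1]
    (∀ t ∈ Set.Ico (0:ℝ) T, ∃ ξ ∈ Set.Icc (0:ℝ) 1, ux ξ t = S t) ∧
    -- (ii) S is locally Lipschitz on [0,T), hence differentiable almost everywhere
    (∀ a b : ℝ, 0 ≤ a → a ≤ b → b < T →
      ∃ L : NNReal, LipschitzOnWith L S (Set.Icc a b)) ∧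
    (∀ᵐ t ∂MeasureTheory.volume, t ∈ Set.Ioo (0:ℝ) T → DifferentiableAt ℝ S t) ∧
    -- (iii) a.e. the derivative of S is u_{tx} evaluated at any maximizer
    (∀ᵐ t ∂MeasureTheory.volume, t ∈ Set.Ioo (0:ℝ) T →
      ∀ ξ : ℝ, ux ξ t = S t → deriv S t = utx ξ t) := by
  have hperiodic : ∀ t ∈ Ico (0:ℝ) T, Function.Periodic (ux · t) 1 := fun t ht =>
    (hper t ht).periodic_of_hasDerivAt fun x => hux x t ht
  have hrange : ∀ t ∈ Ico (0:ℝ) T, (ux · t) '' Icc 0 1 = range (ux · t) := fun t ht => by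
    simpa using (hperiodic t ht).image_Icc one_pos 0
  have hmax : ∀ t ∈ Ico (0:ℝ) T, IsGreatest (range (ux · t)) (S t) := fun t ht => by
    rw [hS t]
    exact (hperiodic t ht).isGreatest_range_sSup one_pos
      (hcux.comp_continuous (continuous_id.prodMk continuous_const) fun x => ⟨mem_univ x, ht⟩)
  have hlip : ∀ a b : ℝ, 0 ≤ a → b < T → ∃ L : ℝ≥0, LipschitzOnWith L S (Icc a b) := by
    intro a b ha hb
    have hsub : Icc a b ⊆ Ico 0 T := fun r hr => ⟨ha.trans hr.1, hr.2.trans_lt hb⟩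
    obtain ⟨L, hL⟩ := isCompact_Icc.exists_lipschitzOnWith_of_hasDerivWithinAt isCompact_Icc
      (convex_Icc a b) (fun ξ _ t ht => (hutx ξ t (hsub ht)).mono hsub)
      (hcutx.mono (prod_mono (subset_univ _) hsub))
    exact ⟨L, .of_isGreatest_image hL fun t ht => hrange t (hsub ht) ▸ hmax t (hsub ht)⟩
  have hdiff := ae_differentiableAt_of_forall_lipschitzOnWith_Icc fun b hb => hlip 0 b le_rfl hb
  refine ⟨fun t ht => ?_, fun a b ha _ hb => hlip a b ha hb, hdiff, ?_⟩
  · obtain ⟨ξ, hξ, hξt⟩ := (hrange t ht).symm ▸ (hmax t ht).1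
    exact ⟨ξ, hξ, hξt⟩
  filter_upwards [hdiff] with t hSdiff ht ξ hξ
  have hIco : Ico (0:ℝ) T ∈ 𝓝 t := Ico_mem_nhds ht.1 ht.2
  refine (hSdiff ht).hasDerivAt.eq_of_eventuallyLE_of_eq
    ((hutx ξ t (Ioo_subset_Ico_self ht)).hasDerivAt hIco) ?_ hξ
  filter_upwards [hIco] with s hs using (hmax s hs).2 ⟨ξ, rfl⟩

/-- Structure theorem for the supremum of the slope (Constantin–Escher): if `u` is 1-periodic
in `x` with `u`, `u_x`, `u_{tx}` continuous on `ℝ × [0,T)`, then `S(t) = sup_x u_x(x,t)` is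
attained at some `ξ(t) ∈ [0,1]`, `S` is locally Lipschitz on `[0,T)` (hence differentiable
a.e.), and for a.e. `t ∈ (0,T)` one has `S'(t) = u_{tx}(ξ,t)` at every maximizer `ξ`. -/
theorem stmt9 (T : ℝ) (hT : 0 < T) (u ux utx : ℝ → ℝ → ℝ)
    (hper : ∀ t ∈ Set.Ico (0:ℝ) T, Function.Periodic (fun x => u x t) 1)
    (hux : ∀ (x : ℝ), ∀ t ∈ Set.Ico (0:ℝ) T, HasDerivAt (fun x' => u x' t) (ux x t) x)
    (hutx : ∀ (x : ℝ), ∀ t ∈ Set.Ico (0:ℝ) T,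
      HasDerivWithinAt (fun t' => ux x t') (utx x t) (Set.Ico (0:ℝ) T) t)
    (hcu : ContinuousOn (fun p : ℝ × ℝ => u p.1 p.2) (Set.univ ×ˢ Set.Ico (0:ℝ) T))
    (hcux : ContinuousOn (fun p : ℝ × ℝ => ux p.1 p.2) (Set.univ ×ˢ Set.Ico (0:ℝ) T))
    (hcutx : ContinuousOn (fun p : ℝ × ℝ => utx p.1 p.2) (Set.univ ×ˢ Set.Ico (0:ℝ) T))
    (S : ℝ → ℝ) (hS : ∀ t, S t = sSup (Set.range fun x => ux x t)) :
    -- (i) the supremum is attained at some point of [0,1]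
    (∀ t ∈ Set.Ico (0:ℝ) T, ∃ ξ ∈ Set.Icc (0:ℝ) 1, ux ξ t = S t) ∧
    -- (ii) S is locally Lipschitz on [0,T), hence differentiable almost everywhere
    (∀ a b : ℝ, 0 ≤ a → a ≤ b → b < T →
      ∃ L : NNReal, LipschitzOnWith L S (Set.Icc a b)) ∧
    (∀ᵐ t ∂MeasureTheory.volume, t ∈ Set.Ioo (0:ℝ) T → DifferentiableAt ℝ S t) ∧
    -- (iii) a.e. the derivative of S is u_{tx} evaluated at any maximizer
    (∀ᵐ t ∂MeasureTheory.volume, t ∈ Set.Ioo (0:ℝ) T →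
      ∀ ξ : ℝ, ux ξ t = S t → deriv S t = utx ξ t) :=
  stmt9_general T u ux utx hper hux hutx hcux hcutx S hS
end
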